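/- Fix a positive integer m with N(m) ≠ 0, and suppose q is a real number such that the sequence k ↦ N(m)·w(k·m) − k·w(m)·N(k·m) + (q/(n+1)!)·k^{n+1} is O(k^n) as k → ∞ (i.e., there is C > 0 with |N(m)·w(km) − k·w(m)·N(km) + (q/(n+1)!)·k^{n+1}| ≤ C·k^n for all positive integers k). Then q/N(m) = (n+1)!·a_n·m^{n+1}·(w(m)/(m·N(m)) − b_{n+1}/a_n). -/
import Mathlib


/-- Algebraic core of Lemma 4.8: with `N(m) = ∑_{i=0}^n a_i m^i` (`a_n > 0`) and
`w(m) = ∑_{j=0}^{n+1} b_j m^j`, if a positive integer `m` has `N(m) ≠ 0` and a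
real `q` satisfies `N(m) w(km) - k w(m) N(km) + (q/(n+1)!) k^{n+1} = O(k^n)` as
the positive integer `k → ∞`, then
`q / N(m) = (n+1)! a_n m^{n+1} (w(m)/(m N(m)) - b_{n+1}/a_n)`. -/
theorem chow_weight_formula
    (n : ℕ) (hn : 1 ≤ n) (a : Fin (n + 1) → ℚ) (b : Fin (n + 2) → ℚ)
    (ha : 0 < a (Fin.last n))
    (Nf wf : ℝ → ℝ)
    (hNf : ∀ m : ℝ, Nf m = ∑ i, (a i : ℝ) * m ^ (i : ℕ))
    (hwf : ∀ m : ℝ, wf m = ∑ j, (b j : ℝ) * m ^ (j : ℕ))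
    (m : ℕ) (hm : 1 ≤ m) (hNm : Nf m ≠ 0) (q : ℝ)
    (hq : ∃ C > (0 : ℝ), ∀ k : ℕ, 1 ≤ k →
      |Nf m * wf ((k : ℝ) * m) - (k : ℝ) * wf m * Nf ((k : ℝ) * m) +
        q / (Nat.factorial (n + 1)) * (k : ℝ) ^ (n + 1)| ≤ C * (k : ℝ) ^ n) :
    q / Nf m = (Nat.factorial (n + 1) : ℝ) * (a (Fin.last n) : ℝ) * (m : ℝ) ^ (n + 1) *
      (wf m / (m * Nf m) - (b (Fin.last (n + 1)) : ℝ) / (a (Fin.last n) : ℝ)) := by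
  obtain ⟨C, hC, hq⟩ := hq
  have hm0 : (0:ℝ) < (m:ℝ) := by exact_mod_cast Nat.lt_of_lt_of_le Nat.zero_lt_one hm
  set c : ℝ := Nf m * (b (Fin.last (n+1)) : ℝ) * (m:ℝ)^(n+1)
      - wf m * (a (Fin.last n) : ℝ) * (m:ℝ)^n + q / (Nat.factorial (n+1)) with hc
  set D : ℝ := (∑ j : Fin (n+1), |Nf m * (b j.castSucc : ℝ) * (m:ℝ)^(j:ℕ)|)
      + ∑ i : Fin n, |wf m * (a i.castSucc : ℝ) * (m:ℝ)^(i:ℕ)| with hD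
  have key : ∀ k : ℕ, 1 ≤ k → |c| * (k:ℝ) ≤ C + D := by
    intro k hk
    have hk1 : (1:ℝ) ≤ (k:ℝ) := by exact_mod_cast hk
    have hkpos : (0:ℝ) < (k:ℝ) := lt_of_lt_of_le one_pos hk1
    set R : ℝ := (∑ j : Fin (n+1), Nf (m:ℝ) * (b j.castSucc:ℝ) * (m:ℝ)^(j:ℕ) * (k:ℝ)^(j:ℕ))
        - ∑ i : Fin n, wf (m:ℝ) * (a i.castSucc:ℝ) * (m:ℝ)^(i:ℕ) * (k:ℝ)^((i:ℕ)+1) with hR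
    have expand : Nf (m:ℝ) * wf ((k:ℝ)*(m:ℝ)) - (k:ℝ) * wf (m:ℝ) * Nf ((k:ℝ)*(m:ℝ))
        + q / (Nat.factorial (n+1)) * (k:ℝ)^(n+1) = c * (k:ℝ)^(n+1) + R := by
      calc Nf (m:ℝ) * wf ((k:ℝ)*(m:ℝ)) - (k:ℝ) * wf (m:ℝ) * Nf ((k:ℝ)*(m:ℝ))
            + q / (Nat.factorial (n+1)) * (k:ℝ)^(n+1)
          = (∑ j : Fin (n+2), Nf (m:ℝ) * (b j:ℝ) * (m:ℝ)^(j:ℕ) * (k:ℝ)^(j:ℕ))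
            - (∑ i : Fin (n+1), wf (m:ℝ) * (a i:ℝ) * (m:ℝ)^(i:ℕ) * (k:ℝ)^((i:ℕ)+1))
            + q / (Nat.factorial (n+1)) * (k:ℝ)^(n+1) := by
            rw [hwf ((k:ℝ)*(m:ℝ)), hNf ((k:ℝ)*(m:ℝ)), Finset.mul_sum, Finset.mul_sum]
            congr 2
            · exact Finset.sum_congr rfl fun j _ => by rw [mul_pow]; ring
            · exact Finset.sum_congr rfl fun i _ => by rw [mul_pow]; ring
        _ = c * (k:ℝ)^(n+1) + R := by
            rw [Fin.sum_univ_castSucc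
                (f := fun j : Fin (n+2) => Nf (m:ℝ) * (b j:ℝ) * (m:ℝ)^(j:ℕ) * (k:ℝ)^(j:ℕ)),
              Fin.sum_univ_castSucc
                (f := fun i : Fin (n+1) => wf (m:ℝ) * (a i:ℝ) * (m:ℝ)^(i:ℕ) * (k:ℝ)^((i:ℕ)+1))]
            simp only [Fin.coe_castSucc, Fin.val_last]
            rw [hc, hR]
            ring
    have hRb : |R| ≤ D * (k:ℝ)^n := by
      rw [hR, hD]
      refine (abs_sub _ _).trans ?_
      rw [add_mul]
      gcongr
      · refine (Finset.abs_sum_le_sum_abs _ _).trans ?_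
        rw [Finset.sum_mul]
        refine Finset.sum_le_sum fun j _ => ?_
        calc |Nf (m:ℝ) * (b j.castSucc:ℝ) * (m:ℝ)^(j:ℕ) * (k:ℝ)^(j:ℕ)|
            = |Nf (m:ℝ) * (b j.castSucc:ℝ) * (m:ℝ)^(j:ℕ)| * (k:ℝ)^(j:ℕ) := by
              rw [abs_mul, abs_pow, abs_of_pos hkpos]
          _ ≤ |Nf (m:ℝ) * (b j.castSucc:ℝ) * (m:ℝ)^(j:ℕ)| * (k:ℝ)^n :=
              mul_le_mul_of_nonneg_left
                (pow_le_pow_right₀ hk1 (Nat.le_of_lt_succ j.isLt)) (abs_nonneg _)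
      · refine (Finset.abs_sum_le_sum_abs _ _).trans ?_
        rw [Finset.sum_mul]
        refine Finset.sum_le_sum fun i _ => ?_
        calc |wf (m:ℝ) * (a i.castSucc:ℝ) * (m:ℝ)^(i:ℕ) * (k:ℝ)^((i:ℕ)+1)|
            = |wf (m:ℝ) * (a i.castSucc:ℝ) * (m:ℝ)^(i:ℕ)| * (k:ℝ)^((i:ℕ)+1) := by
              rw [abs_mul, abs_pow, abs_of_pos hkpos]
          _ ≤ |wf (m:ℝ) * (a i.castSucc:ℝ) * (m:ℝ)^(i:ℕ)| * (k:ℝ)^n :=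
              mul_le_mul_of_nonneg_left
                (pow_le_pow_right₀ hk1 (Nat.succ_le_of_lt i.isLt)) (abs_nonneg _)
    have h1 := hq k hk
    rw [expand] at h1
    have h2 : |c * (k:ℝ)^(n+1)| ≤ (C + D) * (k:ℝ)^n := by
      calc |c * (k:ℝ)^(n+1)| = |c * (k:ℝ)^(n+1) + R - R| := by rw [add_sub_cancel_right]
        _ ≤ |c * (k:ℝ)^(n+1) + R| + |R| := abs_sub _ _
        _ ≤ C * (k:ℝ)^n + D * (k:ℝ)^n := add_le_add h1 hRb
        _ = (C + D) * (k:ℝ)^n := by ring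
    have h3 : |c| * (k:ℝ) * (k:ℝ)^n ≤ (C + D) * (k:ℝ)^n := by
      calc |c| * (k:ℝ) * (k:ℝ)^n = |c * (k:ℝ)^(n+1)| := by
            rw [abs_mul, abs_pow, abs_of_pos hkpos]; ring
        _ ≤ (C + D) * (k:ℝ)^n := h2
    exact le_of_mul_le_mul_right h3 (pow_pos hkpos n)
  have hc0 : c = 0 := by
    by_contra h
    have hcpos : 0 < |c| := abs_pos.mpr h
    obtain ⟨k, hk⟩ := exists_nat_gt ((C + D) / |c|)
    have hk1 : 1 ≤ k := by
      by_contra hk1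
      push_neg at hk1
      interval_cases k
      · simp only [Nat.cast_zero] at hk
        have : 0 ≤ (C + D) / |c| := div_nonneg (by positivity) hcpos.le
        linarith
    have h4 : C + D < |c| * (k:ℝ) := by
      rw [div_lt_iff₀ hcpos] at hk
      linarith
    linarith [key k hk1]
  have ha' : (a (Fin.last n) : ℝ) ≠ 0 := by exact_mod_cast ha.ne'
  have hfac : (Nat.factorial (n+1) : ℝ) ≠ 0 := by positivity
  have hqeq : q = (Nat.factorial (n+1) : ℝ) *
      (wf m * (a (Fin.last n) : ℝ) * (m:ℝ)^n - Nf m * (b (Fin.last (n+1)) : ℝ) * (m:ℝ)^(n+1)) := by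
    have h := hc0
    rw [hc] at h
    field_simp at h ⊢
    linarith
  rw [hqeq]
  field_simp
  ring
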